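/- Suppose Assumptions ALLlip and ADlip hold. Then there exists a constant c̄0 > 0, depending only on d, β and the constants L̄1, L̄2, L̄3, ā, b̄ (and on |h(0)|), such that for every θ ∈ ℝ^d, every 0 < λ ≤ λ̄_max, and ξ a standard d-dimensional Gaussian vector (law N(0, I_d)): E|θ + λ φ_Lin^λ(θ) + √(2λβ^{−1}) ψ_Lin^λ(θ) ξ|² ≤ (1 − λ ā)|θ|² + λ c̄0. -/

import Mathlib

open MeasureTheory ProbabilityTheory Real
open scoped RealInnerProductSpace ENNReal NNReal BigOperators

noncomputable section

/-- `h := ∇U`, the gradient of `U`. -/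
def grad {d : ℕ} (U : EuclideanSpace ℝ (Fin d) → ℝ) (θ : EuclideanSpace ℝ (Fin d)) :
    EuclideanSpace ℝ (Fin d) :=
  gradient U θ

/-- `H := ∇²U`, the Hessian of `U`, as a continuous linear map. -/
def hess {d : ℕ} (U : EuclideanSpace ℝ (Fin d) → ℝ) (θ : EuclideanSpace ℝ (Fin d)) :
    EuclideanSpace ℝ (Fin d) →L[ℝ] EuclideanSpace ℝ (Fin d) :=
  fderiv ℝ (fun x => gradient U x) θ

/-- `∇ h^{(i)}`, the gradient of the `i`-th component of `h = ∇U`. -/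
def gradComp {d : ℕ} (U : EuclideanSpace ℝ (Fin d) → ℝ) (i : Fin d)
    (θ : EuclideanSpace ℝ (Fin d)) : EuclideanSpace ℝ (Fin d) :=
  gradient (fun y => gradient U y i) θ

/-- `∇² h^{(i)}`, the Hessian of the `i`-th component of `h = ∇U`. -/
def hessComp {d : ℕ} (U : EuclideanSpace ℝ (Fin d) → ℝ) (i : Fin d)
    (θ : EuclideanSpace ℝ (Fin d)) :
    EuclideanSpace ℝ (Fin d) →L[ℝ] EuclideanSpace ℝ (Fin d) :=
  fderiv ℝ (fun x => gradComp U i x) θ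

/-- `Υ`, the vector Laplacian of `h = ∇U`:  `Υ^{(i)}(θ) = ∑_j ∂²_{θ^{(j)}} h^{(i)}(θ)`. -/
def vecLap {d : ℕ} (U : EuclideanSpace ℝ (Fin d) → ℝ) (θ : EuclideanSpace ℝ (Fin d)) :
    EuclideanSpace ℝ (Fin d) :=
  (EuclideanSpace.equiv (Fin d) ℝ).symm
    (fun i => ∑ j, hessComp U i θ (EuclideanSpace.single j 1) j)

/-- The standard Gaussian measure `N(0, I_d)` on `ℝ^d`. -/
def stdGaussian (d : ℕ) : Measure (EuclideanSpace ℝ (Fin d)) :=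
  Measure.map (EuclideanSpace.equiv (Fin d) ℝ).symm
    (Measure.pi fun _ : Fin d => gaussianReal 0 1)

/-- `T` is a symmetric positive semidefinite square root of `M`. -/
def IsPsdSqrt {d : ℕ}
    (T M : EuclideanSpace ℝ (Fin d) →L[ℝ] EuclideanSpace ℝ (Fin d)) : Prop :=
  (∀ v w, ⟪T v, w⟫ = ⟪v, T w⟫) ∧ (∀ v, 0 ≤ ⟪T v, v⟫) ∧ T.comp T = M

/-- The aHOLLA drift `φ_Lin^λ(θ) = -h(θ) + (λ/2)(H(θ) h(θ) - β⁻¹ Υ(θ))`. -/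
def hollaDrift {d : ℕ} (U : EuclideanSpace ℝ (Fin d) → ℝ) (β lam : ℝ)
    (θ : EuclideanSpace ℝ (Fin d)) : EuclideanSpace ℝ (Fin d) :=
  -grad U θ + (lam / 2) • (hess U θ (grad U θ) - β⁻¹ • vecLap U θ)

/-- `I_d - λ H(θ) + (λ²/3) H(θ)²`, the square of `ψ_Lin^λ(θ)`. -/
def hollaCov {d : ℕ} (U : EuclideanSpace ℝ (Fin d) → ℝ) (lam : ℝ)
    (θ : EuclideanSpace ℝ (Fin d)) :
    EuclideanSpace ℝ (Fin d) →L[ℝ] EuclideanSpace ℝ (Fin d) :=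
  ContinuousLinearMap.id ℝ _ - lam • hess U θ
    + (lam ^ 2 / 3) • ((hess U θ).comp (hess U θ))

/-- The aHOLLA chain
`Θ_{n+1} = Θ_n + λ φ_Lin^λ(Θ_n) + √(2λ/β) ψ_Lin^λ(Θ_n) ξ_{n+1}`. -/
def hollaChain {d : ℕ} {Ω : Type*} (U : EuclideanSpace ℝ (Fin d) → ℝ) (β lam : ℝ)
    (ψ : EuclideanSpace ℝ (Fin d) → (EuclideanSpace ℝ (Fin d) →L[ℝ] EuclideanSpace ℝ (Fin d)))
    (θ0 : Ω → EuclideanSpace ℝ (Fin d)) (ξ : ℕ → Ω → EuclideanSpace ℝ (Fin d)) :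
    ℕ → Ω → EuclideanSpace ℝ (Fin d)
  | 0 => θ0
  | n + 1 => fun ω =>
      hollaChain U β lam ψ θ0 ξ n ω
        + lam • hollaDrift U β lam (hollaChain U β lam ψ θ0 ξ n ω)
        + Real.sqrt (2 * lam * β⁻¹) • ψ (hollaChain U β lam ψ θ0 ξ n ω) (ξ n ω)

/-- The maximal step size `λ̄_max` for aHOLLA, with `K̄1 = max{L̄3, |h(0)|}` as input. -/
def lamMaxLin (abar L3 K1 : ℝ) : ℝ :=
  min 1 (min abar⁻¹
    (min (abar / (16 * L3 * K1))
      (min (abar / (16 * K1 ^ 2))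
        (min (abar ^ ((1 : ℝ) / 3) / (4 * L3 ^ 2 * K1 ^ 2) ^ ((1 : ℝ) / 3))
          (abar ^ ((1 : ℝ) / 2) / (16 * L3 * K1 ^ 2) ^ ((1 : ℝ) / 3))))))

/-!
For a centred Gaussian `ξ` with identity covariance, `E|a + s T ξ|² = |a|² + s² ∑ⱼ |Tᵀ eⱼ|²`.
When `T` is the symmetric square root of `M = I - λH + (λ²/3)H²`, the sum is the trace of `M`,
at most `d ‖M‖ ≤ d (1 + L̄3 + L̄3²)`, because `‖H‖ ≤ L̄3` for a gradient that is `L̄3`-Lipschitz.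
For the deterministic part, each `∇²h⁽ⁱ⁾` is the derivative of the `i`-th row of `H`, so it has
norm at most `L̄2` and `|Υ| ≤ d² L̄2`; also `|h(θ)| ≤ K̄1 (1 + |θ|)`. Expanding `|θ + λφ|²`,
dissipativity turns the first-order term into `-2λā|θ|² + 2λb̄`, and the restrictions
`λ ≤ 1`, `λā ≤ 1`, `λK̄1² ≤ ā/16` built into `λ̄_max` keep the `λ²` terms below `λā|θ|² + O(λ)`.
-/

open ContinuousLinearMap InnerProductSpace

section LinearAlgebra

variable {E : Type*} [NormedAddCommGroup E] [InnerProductSpace ℝ E] {ι : Type*} [Fintype ι]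

lemma abs_sum_inner_apply_le (A : E →L[ℝ] E) (c : OrthonormalBasis ι ℝ E) :
    |∑ j, ⟪c j, A (c j)⟫| ≤ Fintype.card ι * ‖A‖ := by
  calc |∑ j, ⟪c j, A (c j)⟫| ≤ ∑ j, |⟪c j, A (c j)⟫| := Finset.abs_sum_le_sum_abs _ _
    _ ≤ ∑ _j : ι, ‖A‖ := Finset.sum_le_sum fun j _ ↦ by
        simpa using (abs_real_inner_le_norm (c j) (A (c j))).trans (mul_le_mul_of_nonneg_left
          (A.le_opNorm (c j)) (norm_nonneg _))
    _ = Fintype.card ι * ‖A‖ := by simp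

lemma sum_norm_apply_sq_le_of_comp_self_eq {T M : E →L[ℝ] E}
    (hT : ∀ v w, ⟪T v, w⟫ = ⟪v, T w⟫) (hTT : T.comp T = M) (c : OrthonormalBasis ι ℝ E) :
    ∑ j, ‖T (c j)‖ ^ 2 ≤ Fintype.card ι * ‖M‖ := by
  have h (j : ι) : ‖T (c j)‖ ^ 2 = ⟪c j, M (c j)⟫ := by
    rw [← real_inner_self_eq_norm_sq, hT, ← hTT, comp_apply]
  simpa only [h] using (le_abs_self _).trans (abs_sum_inner_apply_le M c)

lemma EuclideanSpace.norm_le_sum_abs (v : EuclideanSpace ℝ ι) : ‖v‖ ≤ ∑ i, |v i| := by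
  conv_lhs => rw [← (EuclideanSpace.basisFun ι ℝ).sum_repr v]
  refine (norm_sum_le _ _).trans (le_of_eq ?_)
  simp [norm_smul]

lemma norm_add_smul_sq_le {θ φ : E} {lam A B : ℝ} (hlam : 0 ≤ lam) (hA : ⟪θ, φ⟫ ≤ A)
    (hB : ‖φ‖ ≤ B) :
    ‖θ + lam • φ‖ ^ 2 ≤ ‖θ‖ ^ 2 + 2 * lam * A + lam ^ 2 * B ^ 2 := by
  rw [norm_add_sq_real, real_inner_smul_right, norm_smul, Real.norm_of_nonneg hlam, mul_pow]
  nlinarith [mul_le_mul_of_nonneg_left hA hlam,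
    mul_le_mul_of_nonneg_left (pow_le_pow_left₀ (norm_nonneg _) hB 2) (sq_nonneg lam)]

variable {F : Type*} [NormedAddCommGroup F] [InnerProductSpace ℝ F] [CompleteSpace E]
  [CompleteSpace F]

lemma norm_add_smul_apply_sq_eq_sum (a : F) (s : ℝ) (T : E →L[ℝ] F) (c : OrthonormalBasis ι ℝ F)
    (z : E) : ‖a + s • T z‖ ^ 2 = ∑ j, (⟪c j, a⟫ + s * ⟪adjoint T (c j), z⟫) ^ 2 := by
  rw [← c.sum_sq_inner_right]
  congr! 2 with j
  rw [inner_add_right, real_inner_smul_right, adjoint_inner_left]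

end LinearAlgebra

section Gaussian

variable {E : Type*} [NormedAddCommGroup E] [InnerProductSpace ℝ E] [FiniteDimensional ℝ E]
  [MeasurableSpace E] [BorelSpace E]

lemma memLp_inner_stdGaussian (u : E) (p : ℝ≥0∞) (hp : p ≠ ∞) :
    MemLp (fun z ↦ ⟪u, z⟫) p (ProbabilityTheory.stdGaussian E) :=
  IsGaussian.memLp_dual _ (innerSL ℝ u) p hp

lemma integral_inner_stdGaussian (u : E) :
    ∫ z, ⟪u, z⟫ ∂ProbabilityTheory.stdGaussian E = 0 :=
  integral_strongDual_stdGaussian (innerSL ℝ u)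

lemma integral_inner_sq_stdGaussian (u : E) :
    ∫ z, ⟪u, z⟫ ^ 2 ∂ProbabilityTheory.stdGaussian E = ‖u‖ ^ 2 := by
  have h := covarianceBilin_apply
    (IsGaussian.memLp_two_id (μ := ProbabilityTheory.stdGaussian E)) u u
  rw [covarianceBilin_stdGaussian] at h
  simpa [sq, innerSL_apply_apply ℝ, real_inner_self_eq_norm_mul_norm] using h.symm

lemma integrable_add_mul_inner_sq_stdGaussian (α s : ℝ) (u : E) :
    Integrable (fun z ↦ (α + s * ⟪u, z⟫) ^ 2) (ProbabilityTheory.stdGaussian E) :=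
  ((memLp_const α).add ((memLp_inner_stdGaussian u 2 (by simp)).const_mul s)).integrable_sq

lemma integral_add_mul_inner_sq_stdGaussian (α s : ℝ) (u : E) :
    ∫ z, (α + s * ⟪u, z⟫) ^ 2 ∂ProbabilityTheory.stdGaussian E = α ^ 2 + s ^ 2 * ‖u‖ ^ 2 := by
  have h1 : Integrable (fun z ↦ ⟪u, z⟫) (ProbabilityTheory.stdGaussian E) :=
    (memLp_inner_stdGaussian u 1 (by simp)).integrable le_rfl
  have h2 := (memLp_inner_stdGaussian u 2 (by simp)).integrable_sq
  have hexp : (fun z ↦ (α + s * ⟪u, z⟫) ^ 2)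
      = fun z ↦ α ^ 2 + ((2 * α * s) * ⟪u, z⟫ + s ^ 2 * ⟪u, z⟫ ^ 2) := by
    ext z; ring
  rw [hexp, integral_add (integrable_const _) (by exact (h1.const_mul _).add (h2.const_mul _)),
    integral_add (h1.const_mul _) (h2.const_mul _), integral_const_mul, integral_const_mul,
    integral_inner_stdGaussian, integral_inner_sq_stdGaussian]
  simp

variable {F : Type*} [NormedAddCommGroup F] [InnerProductSpace ℝ F] [CompleteSpace F]
  {ι : Type*} [Fintype ι]

lemma lintegral_norm_add_smul_apply_sq_stdGaussian (a : F) (s : ℝ) (T : E →L[ℝ] F)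
    (c : OrthonormalBasis ι ℝ F) :
    ∫⁻ z, (‖a + s • T z‖₊ : ℝ≥0∞) ^ 2 ∂ProbabilityTheory.stdGaussian E
      = ENNReal.ofReal (‖a‖ ^ 2 + s ^ 2 * ∑ j, ‖adjoint T (c j)‖ ^ 2) := by
  have hint : ∀ j, Integrable (fun z ↦ (⟪c j, a⟫ + s * ⟪adjoint T (c j), z⟫) ^ 2)
      (ProbabilityTheory.stdGaussian E) :=
    fun j ↦ integrable_add_mul_inner_sq_stdGaussian _ _ _
  calc ∫⁻ z, (‖a + s • T z‖₊ : ℝ≥0∞) ^ 2 ∂ProbabilityTheory.stdGaussian E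
      = ∫⁻ z, ENNReal.ofReal (∑ j, (⟪c j, a⟫ + s * ⟪adjoint T (c j), z⟫) ^ 2)
          ∂ProbabilityTheory.stdGaussian E := by
        congr! 2 with z
        rw [← norm_add_smul_apply_sq_eq_sum, ENNReal.ofReal_pow (norm_nonneg _), ofReal_norm,
          enorm_eq_nnnorm]
    _ = ENNReal.ofReal (∫ z, ∑ j, (⟪c j, a⟫ + s * ⟪adjoint T (c j), z⟫) ^ 2
          ∂ProbabilityTheory.stdGaussian E) :=
        (ofReal_integral_eq_lintegral_ofReal (integrable_finsetSum _ fun j _ ↦ hint j)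
          (ae_of_all _ fun z ↦ by positivity)).symm
    _ = _ := by
        rw [integral_finsetSum _ fun j _ ↦ hint j]
        simp_rw [integral_add_mul_inner_sq_stdGaussian]
        rw [Finset.sum_add_distrib, c.sum_sq_inner_right, Finset.mul_sum]

end Gaussian

section Calculus

lemma differentiable_gradient {F : Type*} [NormedAddCommGroup F] [InnerProductSpace ℝ F]
    [CompleteSpace F] {f : F → ℝ} (hf : ContDiff ℝ 2 f) : Differentiable ℝ (gradient f) :=
  ((toDual ℝ F).symm.toContinuousLinearEquiv.contDiff.comp
    (hf.fderiv_right (m := 1) le_rfl)).differentiable one_ne_zero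

variable {d : ℕ} {U : EuclideanSpace ℝ (Fin d) → ℝ}

lemma norm_hess_le {L3 : ℝ} (hL3 : 0 ≤ L3)
    (hlip3 : ∀ θ θ' : EuclideanSpace ℝ (Fin d), ‖grad U θ - grad U θ'‖ ≤ L3 * ‖θ - θ'‖)
    (θ : EuclideanSpace ℝ (Fin d)) : ‖hess U θ‖ ≤ L3 :=
  norm_fderiv_le_of_lip' ℝ hL3 (.of_forall fun θ' ↦ hlip3 θ' θ)

lemma norm_grad_le {L3 : ℝ}
    (hlip3 : ∀ θ θ' : EuclideanSpace ℝ (Fin d), ‖grad U θ - grad U θ'‖ ≤ L3 * ‖θ - θ'‖)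
    (θ : EuclideanSpace ℝ (Fin d)) : ‖grad U θ‖ ≤ max L3 ‖grad U 0‖ * (1 + ‖θ‖) := by
  have h := norm_sub_norm_le (grad U θ) (grad U 0)
  have := hlip3 θ 0
  rw [sub_zero] at this
  nlinarith [le_max_left L3 ‖grad U 0‖, le_max_right L3 ‖grad U 0‖, norm_nonneg θ]

lemma gradComp_eq_adjoint_hess (hU : Differentiable ℝ (gradient U)) (i : Fin d)
    (θ : EuclideanSpace ℝ (Fin d)) :
    gradComp U i θ = adjoint (hess U θ) (EuclideanSpace.single i 1) := by
  refine ext_inner_right ℝ fun v ↦ ?_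
  have hcomp : fderiv ℝ (fun y ↦ gradient U y i) θ = (EuclideanSpace.proj i).comp (hess U θ) :=
    ((EuclideanSpace.proj (𝕜 := ℝ) (ι := Fin d) i).hasFDerivAt.comp θ (hU θ).hasFDerivAt).fderiv
  rw [gradComp, inner_gradient_left, hcomp, adjoint_inner_left, EuclideanSpace.inner_single_left]
  simp

lemma norm_hessComp_le (hU : ContDiff ℝ 3 U) {L2 : ℝ} (hL2 : 0 ≤ L2)
    (hlip2 : ∀ θ θ' : EuclideanSpace ℝ (Fin d), ‖hess U θ - hess U θ'‖ ≤ L2 * ‖θ - θ'‖)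
    (i : Fin d) (θ : EuclideanSpace ℝ (Fin d)) : ‖hessComp U i θ‖ ≤ L2 := by
  have hgrad := differentiable_gradient (hU.of_le (by norm_num))
  refine norm_fderiv_le_of_lip' ℝ hL2 (.of_forall fun θ' ↦ ?_)
  rw [gradComp_eq_adjoint_hess hgrad, gradComp_eq_adjoint_hess hgrad, ← sub_apply, ← map_sub]
  calc ‖adjoint (hess U θ' - hess U θ) (EuclideanSpace.single i 1)‖
      ≤ ‖adjoint (hess U θ' - hess U θ)‖ * ‖EuclideanSpace.single i (1 : ℝ)‖ := le_opNorm _ _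
    _ = ‖hess U θ' - hess U θ‖ := by
        rw [PiLp.norm_single, norm_one, mul_one, LinearIsometryEquiv.norm_map]
    _ ≤ L2 * ‖θ' - θ‖ := hlip2 θ' θ

lemma norm_vecLap_le (hU : ContDiff ℝ 3 U) {L2 : ℝ} (hL2 : 0 ≤ L2)
    (hlip2 : ∀ θ θ' : EuclideanSpace ℝ (Fin d), ‖hess U θ - hess U θ'‖ ≤ L2 * ‖θ - θ'‖)
    (θ : EuclideanSpace ℝ (Fin d)) : ‖vecLap U θ‖ ≤ d * (d * L2) := by
  have hcomp (i : Fin d) : |vecLap U θ i| ≤ d * L2 := by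
    have h := abs_sum_inner_apply_le (hessComp U i θ) (EuclideanSpace.basisFun (Fin d) ℝ)
    simp only [EuclideanSpace.basisFun_apply, EuclideanSpace.inner_single_left, map_one,
      one_mul, Fintype.card_fin] at h
    exact h.trans (by gcongr; exact norm_hessComp_le hU hL2 hlip2 i θ)
  calc ‖vecLap U θ‖ ≤ ∑ i, |vecLap U θ i| := EuclideanSpace.norm_le_sum_abs _
    _ ≤ ∑ _i : Fin d, d * L2 := Finset.sum_le_sum fun i _ ↦ hcomp i
    _ = d * (d * L2) := by simp

end Calculus

lemma lamMaxLin_bounds {abar L3 K1 lam : ℝ} (habar : 0 < abar) (hK1 : 0 < K1)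
    (hle : lam ≤ lamMaxLin abar L3 K1) :
    lam ≤ 1 ∧ lam * abar ≤ 1 ∧ lam * K1 ^ 2 ≤ abar / 16 := by
  simp only [lamMaxLin, le_min_iff] at hle
  obtain ⟨h1, h2, -, h4, -⟩ := hle
  refine ⟨h1, ?_, ?_⟩
  · simpa [habar.ne'] using mul_le_mul_of_nonneg_right h2 habar.le
  · rw [le_div_iff₀ (by positivity)] at h4
    linarith

lemma second_order_terms_le {lam a L K c r : ℝ} (hlam : 0 ≤ lam) (hlam1 : lam ≤ 1)
    (hlama : lam * a ≤ 1) (hlamK : lam * K ^ 2 ≤ a / 16) (ha : 0 < a) (hL : 0 ≤ L) (hLK : L ≤ K)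
    (hc : 0 ≤ c) (hr : 0 ≤ r) :
    lam * (r * (L * K * (1 + r) + c) + (K * (1 + r) + lam / 2 * (L * K * (1 + r) + c)) ^ 2)
      ≤ a * r ^ 2 + (a + c ^ 2 / a + c ^ 2) := by
  have hK : 0 ≤ K := hL.trans hLK
  have hlamK' : lam * K ≤ 1 / 4 := by
    nlinarith [mul_nonneg hlam hK, mul_le_mul_of_nonneg_left hlamK hlam]
  have hlamLK : lam * (L * K) ≤ a / 16 := by nlinarith [mul_le_mul_of_nonneg_left hLK hK]
  have hcross : lam * (L * K * (r + r ^ 2)) ≤ a / 32 + 3 * a / 32 * r ^ 2 := by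
    nlinarith [sq_nonneg (1 - r)]
  have hlin : lam * (c * r) ≤ a / 4 * r ^ 2 + c ^ 2 / a := by
    have : c * r ≤ a / 4 * r ^ 2 + c ^ 2 / a := by
      rw [← sub_nonneg]
      have : a / 4 * r ^ 2 + c ^ 2 / a - c * r = (a * r / 2 - c) ^ 2 / a := by field_simp; ring
      rw [this]; positivity
    nlinarith [mul_nonneg hc hr]
  have hsq : lam * (K * (1 + r) + lam / 2 * (L * K * (1 + r) + c)) ^ 2
      ≤ 81 * a / 256 * (1 + r ^ 2) + c ^ 2 / 2 := by
    have hLK' : lam * L ≤ 1 / 4 := by nlinarith [mul_le_mul_of_nonneg_left hLK hlam]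
    have hX : 0 ≤ K * (1 + r) * (1 + lam * L / 2) := by positivity
    have hX' : K * (1 + r) * (1 + lam * L / 2) ≤ 9 / 8 * (K * (1 + r)) := by
      have := mul_le_mul_of_nonneg_left (by linarith : 1 + lam * L / 2 ≤ 9 / 8)
        (by positivity : 0 ≤ K * (1 + r))
      linarith
    have hXsq : lam * (K * (1 + r) * (1 + lam * L / 2)) ^ 2
        ≤ 81 / 64 * (lam * K ^ 2) * (1 + r) ^ 2 := by
      nlinarith [mul_le_mul_of_nonneg_left (pow_le_pow_left₀ hX hX' 2) hlam]
    have hYsq : lam * (lam * c / 2) ^ 2 ≤ c ^ 2 / 4 := by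
      have : lam ^ 3 ≤ 1 := pow_le_one₀ hlam hlam1
      nlinarith [sq_nonneg c]
    have hΦ : K * (1 + r) + lam / 2 * (L * K * (1 + r) + c)
        = K * (1 + r) * (1 + lam * L / 2) + lam * c / 2 := by ring
    rw [hΦ]
    nlinarith [mul_nonneg hlam (sq_nonneg (K * (1 + r) * (1 + lam * L / 2) - lam * c / 2)),
      sq_nonneg (1 - r)]
  nlinarith

section Drift

variable {d : ℕ} {U : EuclideanSpace ℝ (Fin d) → ℝ} {β L2 L3 : ℝ}

lemma norm_hess_grad_sub_vecLap_le (hU : ContDiff ℝ 3 U) (hβ : 0 < β) (hL2 : 0 ≤ L2)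
    (hlip2 : ∀ θ θ' : EuclideanSpace ℝ (Fin d), ‖hess U θ - hess U θ'‖ ≤ L2 * ‖θ - θ'‖)
    (hL3 : 0 ≤ L3)
    (hlip3 : ∀ θ θ' : EuclideanSpace ℝ (Fin d), ‖grad U θ - grad U θ'‖ ≤ L3 * ‖θ - θ'‖)
    (θ : EuclideanSpace ℝ (Fin d)) :
    ‖hess U θ (grad U θ) - β⁻¹ • vecLap U θ‖
      ≤ L3 * max L3 ‖grad U 0‖ * (1 + ‖θ‖) + β⁻¹ * (d * (d * L2)) := by
  calc ‖hess U θ (grad U θ) - β⁻¹ • vecLap U θ‖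
      ≤ ‖hess U θ‖ * ‖grad U θ‖ + β⁻¹ * ‖vecLap U θ‖ := by
        refine (norm_sub_le _ _).trans (add_le_add (le_opNorm _ _) ?_)
        rw [norm_smul, Real.norm_of_nonneg (inv_nonneg.2 hβ.le)]
    _ ≤ L3 * (max L3 ‖grad U 0‖ * (1 + ‖θ‖)) + β⁻¹ * (d * (d * L2)) := by
        gcongr
        exacts [norm_hess_le hL3 hlip3 θ, norm_grad_le hlip3 θ, norm_vecLap_le hU hL2 hlip2 θ]
    _ = L3 * max L3 ‖grad U 0‖ * (1 + ‖θ‖) + β⁻¹ * (d * (d * L2)) := by ring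

lemma norm_add_smul_hollaDrift_sq_le (hU : ContDiff ℝ 3 U) (hβ : 0 < β) (hL2 : 0 ≤ L2)
    (hlip2 : ∀ θ θ' : EuclideanSpace ℝ (Fin d), ‖hess U θ - hess U θ'‖ ≤ L2 * ‖θ - θ'‖)
    (hL3 : 0 < L3)
    (hlip3 : ∀ θ θ' : EuclideanSpace ℝ (Fin d), ‖grad U θ - grad U θ'‖ ≤ L3 * ‖θ - θ'‖)
    {abar bbar : ℝ} (habar : 0 < abar)
    (hAD : ∀ θ : EuclideanSpace ℝ (Fin d), abar * ‖θ‖ ^ 2 - bbar ≤ ⟪θ, grad U θ⟫)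
    {lam : ℝ} (hlam : 0 < lam) (hle : lam ≤ lamMaxLin abar L3 (max L3 ‖grad U 0‖))
    (θ : EuclideanSpace ℝ (Fin d)) :
    ‖θ + lam • hollaDrift U β lam θ‖ ^ 2 ≤ (1 - lam * abar) * ‖θ‖ ^ 2
      + lam * (2 * bbar + (abar + (β⁻¹ * (d * (d * L2))) ^ 2 / abar
        + (β⁻¹ * (d * (d * L2))) ^ 2)) := by
  set K1 := max L3 ‖grad U 0‖
  set c := β⁻¹ * (d * (d * L2))
  set w := hess U θ (grad U θ) - β⁻¹ • vecLap U θ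
  have hw : ‖w‖ ≤ L3 * K1 * (1 + ‖θ‖) + c :=
    norm_hess_grad_sub_vecLap_le hU hβ hL2 hlip2 hL3.le hlip3 θ
  have hinner : ⟪θ, hollaDrift U β lam θ⟫
      ≤ -(abar * ‖θ‖ ^ 2 - bbar) + lam / 2 * (‖θ‖ * (L3 * K1 * (1 + ‖θ‖) + c)) := by
    rw [hollaDrift, inner_add_right, inner_neg_right, real_inner_smul_right]
    nlinarith [hAD θ, real_inner_le_norm θ w, mul_le_mul_of_nonneg_left hw (norm_nonneg θ)]
  have hnorm : ‖hollaDrift U β lam θ‖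
      ≤ K1 * (1 + ‖θ‖) + lam / 2 * (L3 * K1 * (1 + ‖θ‖) + c) := by
    refine (norm_add_le _ _).trans ?_
    rw [norm_neg, norm_smul, Real.norm_of_nonneg (by positivity)]
    nlinarith [norm_grad_le hlip3 θ]
  obtain ⟨hlam1, hlama, hlamK⟩ := lamMaxLin_bounds habar (hL3.trans_le (le_max_left _ _)) hle
  have hstep := second_order_terms_le hlam.le hlam1 hlama hlamK habar hL3.le (le_max_left _ _)
    (by positivity : 0 ≤ c) (norm_nonneg θ)
  nlinarith [norm_add_smul_sq_le hlam.le hinner hnorm, mul_le_mul_of_nonneg_left hstep hlam.le]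

lemma norm_hollaCov_le {lam : ℝ} (hlam : 0 ≤ lam) (hlam1 : lam ≤ 1)
    {θ : EuclideanSpace ℝ (Fin d)} (hH : ‖hess U θ‖ ≤ L3) :
    ‖hollaCov U lam θ‖ ≤ 1 + L3 + L3 ^ 2 := by
  have h1 := norm_sub_le (ContinuousLinearMap.id ℝ (EuclideanSpace ℝ (Fin d))) (lam • hess U θ)
  rw [norm_smul, Real.norm_of_nonneg hlam] at h1
  have h2 : ‖(lam ^ 2 / 3) • (hess U θ).comp (hess U θ)‖
      ≤ lam ^ 2 / 3 * (‖hess U θ‖ * ‖hess U θ‖) := by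
    rw [norm_smul, Real.norm_of_nonneg (by positivity)]
    gcongr
    exact opNorm_comp_le _ _
  have hH0 := norm_nonneg (hess U θ)
  have h3 : lam * ‖hess U θ‖ ≤ L3 := by nlinarith
  have h4 : lam ^ 2 / 3 * (‖hess U θ‖ * ‖hess U θ‖) ≤ L3 ^ 2 := by
    have : lam ^ 2 ≤ 1 := pow_le_one₀ hlam hlam1
    nlinarith [mul_le_mul hH hH hH0 (hH0.trans hH), mul_nonneg hH0 hH0]
  have := norm_id_le (𝕜 := ℝ) (E := EuclideanSpace ℝ (Fin d))
  exact (norm_add_le _ _).trans (by linarith)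

end Drift

theorem aholla_one_step_second_moment_general
    (d : ℕ)
    (β : ℝ) (hβ : 0 < β)
    (U : EuclideanSpace ℝ (Fin d) → ℝ) (hU : ContDiff ℝ 3 U)
    -- Assumption ALLlip
    (L2 L3 : ℝ) (hL2 : 0 < L2) (hL3 : 0 < L3)
    (hlip2 : ∀ θ θ' : EuclideanSpace ℝ (Fin d), ‖hess U θ - hess U θ'‖ ≤ L2 * ‖θ - θ'‖)
    (hlip3 : ∀ θ θ' : EuclideanSpace ℝ (Fin d), ‖grad U θ - grad U θ'‖ ≤ L3 * ‖θ - θ'‖)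
    -- Assumption ADlip
    (abar bbar : ℝ) (habar : 0 < abar) (hbbar : 0 < bbar)
    (hAD : ∀ θ : EuclideanSpace ℝ (Fin d), abar * ‖θ‖ ^ 2 - bbar ≤ ⟪θ, grad U θ⟫) :
    ∃ c0 : ℝ, 0 < c0 ∧
      ∀ θ : EuclideanSpace ℝ (Fin d),
        ∀ lam : ℝ, 0 < lam → lam ≤ lamMaxLin abar L3 (max L3 ‖grad U 0‖) →
          ∀ T : EuclideanSpace ℝ (Fin d) →L[ℝ] EuclideanSpace ℝ (Fin d),
            IsPsdSqrt T (hollaCov U lam θ) →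
            (∫⁻ x, (‖θ + lam • hollaDrift U β lam θ
                  + Real.sqrt (2 * lam * β⁻¹) • T x‖₊ : ℝ≥0∞) ^ (2 : ℕ) ∂(stdGaussian d))
              ≤ ENNReal.ofReal ((1 - lam * abar) * ‖θ‖ ^ 2 + lam * c0) := by
  set c := β⁻¹ * (d * (d * L2))
  refine ⟨2 * bbar + (abar + c ^ 2 / abar + c ^ 2) + 2 * β⁻¹ * (d * (1 + L3 + L3 ^ 2)),
    by positivity, ?_⟩
  rintro θ lam hlam hle T ⟨hTsymm, -, hTT⟩
  have hlam1 := (lamMaxLin_bounds habar (hL3.trans_le (le_max_left _ _)) hle).1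
  have hnoise : ∑ j, ‖T (EuclideanSpace.basisFun (Fin d) ℝ j)‖ ^ 2 ≤ d * (1 + L3 + L3 ^ 2) := by
    refine (sum_norm_apply_sq_le_of_comp_self_eq hTsymm hTT _).trans ?_
    simpa using mul_le_mul_of_nonneg_left
      (norm_hollaCov_le hlam.le hlam1 (norm_hess_le hL3.le hlip3 θ)) (Nat.cast_nonneg d)
  have hTadj : adjoint T = T :=
    (ContinuousLinearMap.isSelfAdjoint_iff_isSymmetric.2 hTsymm).adjoint_eq
  rw [show stdGaussian d = ProbabilityTheory.stdGaussian _ from map_pi_eq_stdGaussian,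
    lintegral_norm_add_smul_apply_sq_stdGaussian _ _ _ (EuclideanSpace.basisFun (Fin d) ℝ),
    hTadj, Real.sq_sqrt (by positivity)]
  refine ENNReal.ofReal_le_ofReal ?_
  nlinarith [norm_add_smul_hollaDrift_sq_le hU hβ hL2.le hlip2 hL3 hlip3 habar hAD hlam hle θ,
    mul_le_mul_of_nonneg_left hnoise (by positivity : 0 ≤ 2 * lam * β⁻¹)]

/-- key one-step estimate in the proof of Lemma `lem:2ndpthmmtlip` of the
paper: one-step second moment bound for the aHOLLA update. -/
theorem aholla_one_step_second_moment
    (d : ℕ) (hd : 1 ≤ d)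
    (β q : ℝ) (hβ : 0 < β) (hq0 : 0 < q) (hq1 : q ≤ 1)
    (U : EuclideanSpace ℝ (Fin d) → ℝ) (hU : ContDiff ℝ 3 U)
    -- Assumption ALLlip
    (L1 L2 L3 : ℝ) (hL1 : 0 < L1) (hL2 : 0 < L2) (hL3 : 0 < L3)
    (hlip1 : ∀ (i : Fin d) (θ θ' : EuclideanSpace ℝ (Fin d)),
      ‖hessComp U i θ - hessComp U i θ'‖ ≤ L1 * ‖θ - θ'‖ ^ q)
    (hlip2 : ∀ θ θ' : EuclideanSpace ℝ (Fin d), ‖hess U θ - hess U θ'‖ ≤ L2 * ‖θ - θ'‖)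
    (hlip3 : ∀ θ θ' : EuclideanSpace ℝ (Fin d), ‖grad U θ - grad U θ'‖ ≤ L3 * ‖θ - θ'‖)
    -- Assumption ADlip
    (abar bbar : ℝ) (habar : 0 < abar) (hbbar : 0 < bbar)
    (hAD : ∀ θ : EuclideanSpace ℝ (Fin d), abar * ‖θ‖ ^ 2 - bbar ≤ ⟪θ, grad U θ⟫) :
    ∃ c0 : ℝ, 0 < c0 ∧
      ∀ θ : EuclideanSpace ℝ (Fin d),
        ∀ lam : ℝ, 0 < lam → lam ≤ lamMaxLin abar L3 (max L3 ‖grad U 0‖) →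
          ∀ T : EuclideanSpace ℝ (Fin d) →L[ℝ] EuclideanSpace ℝ (Fin d),
            IsPsdSqrt T (hollaCov U lam θ) →
            (∫⁻ x, (‖θ + lam • hollaDrift U β lam θ
                  + Real.sqrt (2 * lam * β⁻¹) • T x‖₊ : ℝ≥0∞) ^ (2 : ℕ) ∂(stdGaussian d))
              ≤ ENNReal.ofReal ((1 - lam * abar) * ‖θ‖ ^ 2 + lam * c0) :=
  aholla_one_step_second_moment_general d β hβ U hU L2 L3 hL2 hL3 hlip2 hlip3 abar bbar habar hbbar
    hAD
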